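/- Let W1, W2, W3, W4 be Lagrangian subspaces of ℝ^{2m} with its standard symplectic form Ω. Then there exists g ∈ GL(2m,ℝ) with Ω(g x, g y) = Ω(x,y) for all x,y (i.e., g symplectic) such that g(W1) = W3 and g(W2) = W4, if and only if dim(W1 ∩ W2) = dim(W3 ∩ W4). -/

import Mathlib

/-- The standard symplectic form on `ℝ^{2m}`:
`Ω(x,y) = Σ_{i=1}^m (x_i y_{m+i} − x_{m+i} y_i)`. -/
def Omega (m : ℕ) (x y : Fin (2 * m) → ℝ) : ℝ :=
  ∑ i : Fin m,
    (x ⟨i.1, by have := i.2; omega⟩ * y ⟨m + i.1, by have := i.2; omega⟩ -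
      x ⟨m + i.1, by have := i.2; omega⟩ * y ⟨i.1, by have := i.2; omega⟩)

/-- A subspace of `ℝ^{2m}` is Lagrangian if it has dimension `m` and `Ω` vanishes on it. -/
def IsLagrangian (m : ℕ) (W : Submodule ℝ (Fin (2 * m) → ℝ)) : Prop :=
  Module.finrank ℝ W = m ∧ ∀ x ∈ W, ∀ y ∈ W, Omega m x y = 0

/-- A *Lagrangian symmetry* at a Lagrangian subspace `W ⊆ ℝ^{2m}`:
an invertible linear map `g` such that for some `c ≠ 0`, `g w = c • w` for all `w ∈ W`
and `Ω(g x, g y) = −c² Ω(x, y)` for all `x, y`. -/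
def LagSym (m : ℕ) (W : Submodule ℝ (Fin (2 * m) → ℝ))
    (g : (Fin (2 * m) → ℝ) ≃ₗ[ℝ] (Fin (2 * m) → ℝ)) : Prop :=
  ∃ c : ℝ, c ≠ 0 ∧ (∀ w ∈ W, g w = c • w) ∧
    ∀ x y : Fin (2 * m) → ℝ, Omega m (g x) (g y) = -c ^ 2 * Omega m x y

/-!
Given Lagrangians `L₁, L₂` with `dim (L₁ ⊓ L₂) = k`, there is a symplectic basis `(p, q)` with
`L₁ = span p` and `L₂ = span (p₁, …, p_k, q_{k+1}, …, q_m)`. To build it, take a basis `u` of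
`L₁ ⊓ L₂` and a complement `c` of it in `L₂`. Since `L₂` is its own orthogonal, an element of `L₁`
orthogonal to every `c j` lies in `L₁ ⊓ L₂`, so pairing with `c` maps `L₁` onto `Kʳ` and yields a
family `a ⊆ L₁` dual to `c`. Finally `u` is completed by an isotropic family `v` dual to it and
orthogonal to `a` and `c`. The linear map sending one adapted basis to another has the same Gram
matrix on both sides, hence is symplectic; conversely a symplectic `g` maps `W₁ ⊓ W₂` onto
`W₃ ⊓ W₄`.
-/

open Module Submodule

section

variable {K V : Type*} [Field K] [AddCommGroup V] [Module K V]

theorem Submodule.exists_linearIndependent_span_range_eq [FiniteDimensional K V]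
    (N : Submodule K V) {k : ℕ} (hk : finrank K N = k) :
    ∃ u : Fin k → V, LinearIndependent K u ∧ span K (Set.range u) = N := by
  let b := finBasisOfFinrankEq K N hk
  refine ⟨N.subtype ∘ b, b.linearIndependent.map' _ N.ker_subtype, ?_⟩
  rw [Set.range_comp, span_image, b.span_eq, map_subtype_top]

theorem Submodule.exists_sup_span_range_eq [FiniteDimensional K V] {D L : Submodule K V}
    (hDL : D ≤ L) {r : ℕ} (hr : finrank K L = finrank K D + r) :
    ∃ c : Fin r → V, D ⊔ span K (Set.range c) = L := by
  obtain ⟨E, hE⟩ := exists_isCompl D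
  have hsup : D ⊔ E ⊓ L = L := by rw [← sup_inf_assoc_of_le E hDL, hE.sup_eq_top, top_inf_eq]
  have hinf : D ⊓ (E ⊓ L) = ⊥ := disjoint_iff.1 (hE.disjoint.mono_right inf_le_left)
  have hdim := finrank_sup_add_finrank_inf_eq D (E ⊓ L)
  rw [hsup, hinf, finrank_bot] at hdim
  obtain ⟨c, -, hc⟩ := (E ⊓ L).exists_linearIndependent_span_range_eq (k := r) (by omega)
  exact ⟨c, by rw [hc, hsup]⟩

theorem linearIndependent_of_dual {κ : Type*} [DecidableEq κ] {w : κ → V} (f : κ → Dual K V)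
    (hfw : ∀ i j, f i (w j) = if i = j then 1 else 0) : LinearIndependent K w := by
  have hdual : ⇑(LinearMap.pi f) ∘ w = fun j => Pi.single j 1 := by
    ext j i
    simp [hfw, Pi.single_apply]
  exact .of_comp (LinearMap.pi f) (hdual ▸ Pi.linearIndependent_single_one κ K)

theorem linearIndependent_sumElim_of_dual {ι κ : Type*} [Fintype ι] [Fintype κ] [DecidableEq κ]
    {u : ι → V} {w : κ → V} (hu : LinearIndependent K u) (f : κ → Dual K V)
    (hfu : ∀ i j, f i (u j) = 0) (hfw : ∀ i j, f i (w j) = if i = j then 1 else 0) :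
    LinearIndependent K (Sum.elim u w) := by
  rw [Fintype.linearIndependent_iff] at hu ⊢
  intro β hβ
  rw [Fintype.sum_sum_type] at hβ
  have hw : ∀ i, β (.inr i) = 0 := fun i => by
    simpa [hfu, hfw] using congrArg (f i) hβ
  have hu' := hu (β ∘ Sum.inl) (by simpa [hw] using hβ)
  rintro (j | j)
  exacts [hu' j, hw j]

namespace LinearMap.BilinForm

variable {B : LinearMap.BilinForm K V}

theorem apply_eq_zero_of_orthogonal_eq {L : Submodule K V} (hL : B.orthogonal L = L) {x y : V}
    (hx : x ∈ L) (hy : y ∈ L) : B x y = 0 := by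
  rw [← hL] at hy
  exact hy x hx

theorem apply_basis_equiv_apply {ι : Type*} (b b' : Basis ι K V)
    (h : ∀ i j, B (b' i) (b' j) = B (b i) (b j)) (x y : V) :
    B (b.equiv b' (.refl ι) x) (b.equiv b' (.refl ι) y) = B x y := by
  have hB : B.compl₁₂ (b.equiv b' (.refl ι)).toLinearMap (b.equiv b' (.refl ι)).toLinearMap =
      B := LinearMap.ext_basis b b fun i j => by simp [h]
  exact LinearMap.congr_fun₂ hB x y

structure IsSymplecticPair (B : LinearMap.BilinForm K V) {ι : Type*} [DecidableEq ι]
    (p q : ι → V) : Prop where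
  apply_p_p : ∀ i j, B (p i) (p j) = 0
  apply_q_q : ∀ i j, B (q i) (q j) = 0
  apply_p_q : ∀ i j, B (p i) (q j) = if i = j then 1 else 0

namespace IsSymplecticPair

variable {ι : Type*} [DecidableEq ι] {p q p' q' : ι → V}

theorem linearIndependent (h : B.IsSymplecticPair p q) : LinearIndependent K (Sum.elim p q) :=
  linearIndependent_of_dual (Sum.elim (fun i => B.flip (q i)) (fun i => B (p i))) <| by
    rintro (i | i) (j | j) <;> simp [h.apply_p_p, h.apply_q_q, h.apply_p_q, eq_comm]

theorem apply_sumElim_eq (hAlt : B.IsAlt) (h : B.IsSymplecticPair p q)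
    (h' : B.IsSymplecticPair p' q') (x y : ι ⊕ ι) :
    B (Sum.elim p' q' x) (Sum.elim p' q' y) = B (Sum.elim p q x) (Sum.elim p q y) := by
  rcases x with i | i <;> rcases y with j | j
  · simp [h.apply_p_p, h'.apply_p_p]
  · simp [h.apply_p_q, h'.apply_p_q]
  · simp only [Sum.elim_inl, Sum.elim_inr]
    rw [← hAlt.neg_eq (p j), ← hAlt.neg_eq (p' j), h.apply_p_q, h'.apply_p_q]
  · simp [h.apply_q_q, h'.apply_q_q]

end IsSymplecticPair

variable [FiniteDimensional K V]

theorem exists_dual_family {κ : Type*} [Fintype κ] [DecidableEq κ] (hB : B.IsRefl)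
    {L₁ L₂ : Submodule K V} (h₁ : L₁ ≤ B.orthogonal L₁) (h₂ : B.orthogonal L₂ ≤ L₂)
    {c : κ → V} (hc : L₁ ⊓ L₂ ⊔ span K (Set.range c) = L₂)
    (hr : finrank K L₁ = finrank K ↥(L₁ ⊓ L₂) + Fintype.card κ) :
    ∃ a : κ → V, (∀ i, a i ∈ L₁) ∧ ∀ i j, B (a i) (c j) = if i = j then 1 else 0 := by
  let φ : L₁ →ₗ[K] (κ → K) := LinearMap.pi fun j => B.flip (c j) ∘ₗ L₁.subtype
  have hker : LinearMap.ker φ ≤ (L₁ ⊓ L₂).comap L₁.subtype := by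
    intro x hx
    have hxc : ∀ j, B x (c j) = 0 := fun j => congrFun hx j
    have hL₂ : L₁ ⊓ L₂ ⊔ span K (Set.range c) ≤ LinearMap.ker (B.flip x) :=
      sup_le (fun n hn => h₁ x.2 n hn.1)
        (span_le.2 (Set.range_subset_iff.2 fun j => hB _ _ (hxc j)))
    exact ⟨x.2, h₂ fun n hn => hL₂ (hc.ge hn)⟩
  have hφ : LinearMap.range φ = ⊤ := by
    refine eq_top_of_finrank_eq (le_antisymm (finrank_le _) ?_)
    have hrank := φ.finrank_range_add_finrank_ker
    have hkerle := (finrank_mono hker).trans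
      (LinearEquiv.finrank_eq (comapSubtypeEquivOfLe inf_le_left)).le
    rw [finrank_fintype_fun_eq_card]
    omega
  choose a ha using fun i => LinearMap.range_eq_top.1 hφ (Pi.single i 1)
  refine ⟨fun i => a i, fun i => (a i).2, fun i j => ?_⟩
  simpa [φ, Pi.single_apply, eq_comm] using congrFun (ha i) j

theorem exists_forall_apply_eq (hB : B.Nondegenerate) {ι : Type*} {z : ι → V}
    (hz : LinearIndependent K z) (t : ι → K) : ∃ x, ∀ i, B (z i) x = t i := by
  obtain ⟨f, hf⟩ := LinearMap.exists_extend ((Basis.span hz).constr K t)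
  refine ⟨(B.flip.toDual hB.flip).symm f, fun i => ?_⟩
  have h := LinearMap.congr_fun hf (Basis.span hz i)
  rw [LinearMap.comp_apply, Basis.constr_basis, Submodule.subtype_apply, Basis.span_apply] at h
  rw [← h, ← flip_apply, apply_toDual_symm_apply]

theorem exists_isotropic_dual [Invertible (2 : K)] (hB : B.Nondegenerate) (hAlt : B.IsAlt)
    {ι κ : Type*} [Fintype ι] [DecidableEq ι] {u : ι → V} {z : κ → V}
    (hind : LinearIndependent K (Sum.elim u z)) (huu : ∀ i j, B (u i) (u j) = 0)
    (hzu : ∀ i j, B (z i) (u j) = 0) :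
    ∃ v : ι → V, (∀ i j, B (u i) (v j) = if i = j then 1 else 0) ∧
      (∀ i j, B (z i) (v j) = 0) ∧ ∀ i j, B (v i) (v j) = 0 := by
  choose w hw using fun j =>
    exists_forall_apply_eq hB hind (Sum.elim (fun i => if i = j then (1 : K) else 0) 0)
  have huw : ∀ i j, B (u i) (w j) = if i = j then 1 else 0 := fun i j => hw j (.inl i)
  have hzw : ∀ i j, B (z i) (w j) = 0 := fun i j => hw j (.inr i)
  -- Since `B (w i) (u l) = -δ_il`, subtracting `½ ∑ l, B (w j) (w l) • u l` from `w j` makes the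
  -- family isotropic without changing its pairings with `u` and `z`.
  set v : ι → V := fun j => w j - ∑ l, (⅟2 * B (w j) (w l)) • u l
  have hv : ∀ x j, B x (v j) = B x (w j) - ∑ l, ⅟2 * B (w j) (w l) * B x (u l) := by
    simp [v, smul_eq_mul]
  have huv : ∀ i j, B (u i) (v j) = if i = j then 1 else 0 := by simp [hv, huu, huw]
  refine ⟨v, huv, by simp [hv, hzu, hzw], fun i j => ?_⟩
  have hwu : ∀ l, B (w i) (u l) = -if l = i then 1 else 0 := fun l => by
    rw [← hAlt.neg_eq (u l) (w i), huw]
  have hv' : ∀ y, B (v i) y = B (w i) y - ∑ l, ⅟2 * B (w i) (w l) * B (u l) y := by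
    simp [v, smul_eq_mul]
  rw [hv', hv]
  simp only [huv, hwu, mul_neg, mul_ite, mul_one, mul_zero, Finset.sum_neg_distrib,
    Finset.sum_ite_eq', Finset.mem_univ, if_true, sub_neg_eq_add]
  rw [← hAlt.neg_eq (w i) (w j)]
  linear_combination (-B (w i) (w j)) * invOf_two_add_invOf_two (R := K)

theorem finrank_eq_finrank_of_orthogonal_eq (hB : B.Nondegenerate) {L₁ L₂ : Submodule K V}
    (h₁ : B.orthogonal L₁ = L₁) (h₂ : B.orthogonal L₂ = L₂) : finrank K L₁ = finrank K L₂ := by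
  have e₁ := finrank_orthogonal hB L₁
  have e₂ := finrank_orthogonal hB L₂
  rw [h₁] at e₁
  rw [h₂] at e₂
  have := finrank_le L₁
  have := finrank_le L₂
  omega

theorem IsSymplecticPair.exists_isometry {ι : Type*} [Fintype ι] [DecidableEq ι]
    {p q p' q' : ι → V} (hAlt : B.IsAlt) (h : B.IsSymplecticPair p q)
    (h' : B.IsSymplecticPair p' q') (hcard : finrank K V = 2 * Fintype.card ι) :
    ∃ g : V ≃ₗ[K] V, (∀ x y, B (g x) (g y) = B x y) ∧ ⇑g ∘ p = p' ∧ ⇑g ∘ q = q' := by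
  have hcard' : Fintype.card (ι ⊕ ι) = finrank K V := by simp [hcard, two_mul]
  let b := basisOfLinearIndependentOfCardEqFinrank' _ h.linearIndependent hcard'
  let b' := basisOfLinearIndependentOfCardEqFinrank' _ h'.linearIndependent hcard'
  have hg : ∀ x, b.equiv b' (.refl _) (Sum.elim p q x) = Sum.elim p' q' x := fun x => by
    simpa [b, b'] using b.equiv_apply x b' (.refl _)
  refine ⟨b.equiv b' (.refl _), apply_basis_equiv_apply b b' fun x y => ?_,
    funext fun i => hg (.inl i), funext fun i => hg (.inr i)⟩
  simpa [b, b'] using h.apply_sumElim_eq hAlt h' x y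

theorem exists_dual_families_of_orthogonal_eq (hB : B.Nondegenerate) (hAlt : B.IsAlt)
    {L₁ L₂ : Submodule K V} (h₁ : B.orthogonal L₁ = L₁) (h₂ : B.orthogonal L₂ = L₂) {k r : ℕ}
    (hk : finrank K ↥(L₁ ⊓ L₂) = k) (hr : finrank K L₂ = k + r) :
    ∃ (u : Fin k → V) (a c : Fin r → V), span K (Set.range u) = L₁ ⊓ L₂ ∧ (∀ i, a i ∈ L₁) ∧
      L₁ ⊓ L₂ ⊔ span K (Set.range c) = L₂ ∧ (∀ i j, B (a i) (c j) = if i = j then 1 else 0) ∧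
      LinearIndependent K (Sum.elim u (Sum.elim a c)) := by
  obtain ⟨u, hu, hspan_u⟩ := (L₁ ⊓ L₂).exists_linearIndependent_span_range_eq hk
  obtain ⟨c, hc⟩ := exists_sup_span_range_eq (inf_le_right : L₁ ⊓ L₂ ≤ L₂) (hr.trans (by rw [hk]))
  obtain ⟨a, ha, hac⟩ := exists_dual_family hAlt.isRefl h₁.ge h₂.le hc
    (by simp [finrank_eq_finrank_of_orthogonal_eq hB h₁ h₂, hr, hk])
  have huD : ∀ i, u i ∈ L₁ ⊓ L₂ := fun i => hspan_u ▸ subset_span (Set.mem_range_self i)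
  have hc₂ : ∀ i, c i ∈ L₂ := fun i => hc ▸ mem_sup_right (subset_span (Set.mem_range_self i))
  have iso₁ : ∀ {x y}, x ∈ L₁ → y ∈ L₁ → B x y = 0 := apply_eq_zero_of_orthogonal_eq h₁
  have iso₂ : ∀ {x y}, x ∈ L₂ → y ∈ L₂ → B x y = 0 := apply_eq_zero_of_orthogonal_eq h₂
  refine ⟨u, a, c, hspan_u, ha, hc, hac, linearIndependent_sumElim_of_dual hu
    (Sum.elim (fun i => B.flip (c i)) (fun i => B (a i))) ?_ ?_⟩
  · rintro (i | i) j <;> simp [iso₂ (huD j).2 (hc₂ i), iso₁ (ha i) (huD j).1]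
  · rintro (i | i) (j | j) <;> simp [hac, eq_comm, iso₁ (ha i) (ha j), iso₂ (hc₂ j) (hc₂ i)]

theorem exists_isSymplecticPair_of_orthogonal_eq [Invertible (2 : K)] (hB : B.Nondegenerate)
    (hAlt : B.IsAlt) {L₁ L₂ : Submodule K V} (h₁ : B.orthogonal L₁ = L₁)
    (h₂ : B.orthogonal L₂ = L₂) {k r : ℕ} (hk : finrank K ↥(L₁ ⊓ L₂) = k)
    (hr : finrank K L₂ = k + r) :
    ∃ p q : Fin k ⊕ Fin r → V, B.IsSymplecticPair p q ∧ L₁ = span K (Set.range p) ∧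
      L₂ = span K (Set.range (Sum.elim (p ∘ Sum.inl) (q ∘ Sum.inr))) := by
  obtain ⟨u, a, c, hspan_u, ha, hc, hac, hind⟩ :=
    exists_dual_families_of_orthogonal_eq hB hAlt h₁ h₂ hk hr
  have huD : ∀ i, u i ∈ L₁ ⊓ L₂ := fun i => hspan_u ▸ subset_span (Set.mem_range_self i)
  have hc₂ : ∀ i, c i ∈ L₂ := fun i => hc ▸ mem_sup_right (subset_span (Set.mem_range_self i))
  have iso₁ : ∀ {x y}, x ∈ L₁ → y ∈ L₁ → B x y = 0 := apply_eq_zero_of_orthogonal_eq h₁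
  have iso₂ : ∀ {x y}, x ∈ L₂ → y ∈ L₂ → B x y = 0 := apply_eq_zero_of_orthogonal_eq h₂
  obtain ⟨v, huv, hzv, hvv⟩ := exists_isotropic_dual hB hAlt hind
    (fun i j => iso₁ (huD i).1 (huD j).1)
    (by rintro (i | i) j <;> simp [iso₁ (ha i) (huD j).1, iso₂ (hc₂ i) (huD j).2])
  have hp₁ : ∀ x, Sum.elim u a x ∈ L₁ := by rintro (i | i); exacts [(huD i).1, ha i]
  refine ⟨Sum.elim u a, Sum.elim v c, ⟨fun x y => iso₁ (hp₁ x) (hp₁ y), ?_, ?_⟩, ?_, ?_⟩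
  · rintro (i | i) (j | j)
    · exact hvv i j
    · simpa [← hAlt.neg_eq (v i)] using hzv (.inr j) i
    · exact hzv (.inr i) j
    · exact iso₂ (hc₂ i) (hc₂ j)
  · rintro (i | i) (j | j)
    · simpa using huv i j
    · simpa using iso₂ (huD i).2 (hc₂ j)
    · simpa using hzv (.inl i) j
    · simpa using hac i j
  · have hua : LinearIndependent K (Sum.elim u a) := by
      simpa [Sum.elim_comp_map] using hind.comp (Sum.map _root_.id Sum.inl)
        (Sum.map_injective.2 ⟨Function.injective_id, Sum.inl_injective⟩)
    refine (eq_of_le_of_finrank_eq (span_le.2 (Set.range_subset_iff.2 hp₁)) ?_).symm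
    simp [finrank_span_eq_card hua, finrank_eq_finrank_of_orthogonal_eq hB h₁ h₂, hr]
  · simp [Set.Sum.elim_range, span_union, hspan_u, hc]

end LinearMap.BilinForm

end

noncomputable def omegaForm (m : ℕ) : LinearMap.BilinForm ℝ (Fin (2 * m) → ℝ) :=
  ∑ i : Fin m,
    ((LinearMap.mul ℝ ℝ).compl₁₂ (.proj ⟨i.1, by omega⟩) (.proj ⟨m + i.1, by omega⟩) -
      (LinearMap.mul ℝ ℝ).compl₁₂ (.proj ⟨m + i.1, by omega⟩) (.proj ⟨i.1, by omega⟩))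

theorem omegaForm_apply (m : ℕ) (x y : Fin (2 * m) → ℝ) : omegaForm m x y = Omega m x y := by
  simp [omegaForm, Omega]

theorem omegaForm_isAlt (m : ℕ) : (omegaForm m).IsAlt := fun x => by
  simp [omegaForm_apply, Omega, mul_comm]

theorem Omega_pi_single_add (m : ℕ) (x : Fin (2 * m) → ℝ) (i : Fin m) :
    Omega m x (Pi.single ⟨m + i.1, by omega⟩ 1) = x ⟨i.1, by omega⟩ := by
  have h : ∀ j : Fin m, j.1 ≠ m + i.1 := fun j => by omega
  simp [Omega, Pi.single_apply, Fin.val_inj, h]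

theorem Omega_pi_single (m : ℕ) (x : Fin (2 * m) → ℝ) (i : Fin m) :
    Omega m x (Pi.single ⟨i.1, by omega⟩ 1) = -x ⟨m + i.1, by omega⟩ := by
  have h : ∀ j : Fin m, m + j.1 ≠ i.1 := fun j => by omega
  simp [Omega, Pi.single_apply, Fin.val_inj, h]

theorem omegaForm_nondegenerate (m : ℕ) : (omegaForm m).Nondegenerate := by
  refine (LinearMap.IsRefl.nondegenerate_iff_separatingLeft (omegaForm_isAlt m).isRefl).2
    fun x hx => funext fun j => ?_
  simp only [omegaForm_apply] at hx
  rcases lt_or_ge j.1 m with hj | hj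
  · simpa [hx] using (Omega_pi_single_add m x ⟨j.1, hj⟩).symm
  · have hj' : (⟨m + (j.1 - m), by omega⟩ : Fin (2 * m)) = j :=
      Fin.ext (Nat.add_sub_cancel' hj)
    simpa [hx, hj'] using Omega_pi_single m x ⟨j.1 - m, by omega⟩

theorem IsLagrangian.orthogonal_eq {m : ℕ} {W : Submodule ℝ (Fin (2 * m) → ℝ)}
    (h : IsLagrangian m W) : (omegaForm m).orthogonal W = W := by
  refine (Submodule.eq_of_le_of_finrank_eq (fun y hy x hx => ?_) ?_).symm
  · rw [omegaForm_apply]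
    exact h.2 x hx y hy
  · rw [LinearMap.BilinForm.finrank_orthogonal (omegaForm_nondegenerate m), finrank_fin_fun, h.1]
    omega

theorem stmt9 (m : ℕ)
    (W1 W2 W3 W4 : Submodule ℝ (Fin (2 * m) → ℝ))
    (h1 : IsLagrangian m W1) (h2 : IsLagrangian m W2)
    (h3 : IsLagrangian m W3) (h4 : IsLagrangian m W4) :
    (∃ g : (Fin (2 * m) → ℝ) ≃ₗ[ℝ] (Fin (2 * m) → ℝ),
        (∀ x y : Fin (2 * m) → ℝ, Omega m (g x) (g y) = Omega m x y) ∧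
        W1.map (g : (Fin (2 * m) → ℝ) →ₗ[ℝ] (Fin (2 * m) → ℝ)) = W3 ∧
        W2.map (g : (Fin (2 * m) → ℝ) →ₗ[ℝ] (Fin (2 * m) → ℝ)) = W4)
      ↔ Module.finrank ℝ ↥(W1 ⊓ W2) = Module.finrank ℝ ↥(W3 ⊓ W4) := by
  open LinearMap.BilinForm in
  constructor
  · rintro ⟨g, -, rfl, rfl⟩
    rw [← Submodule.map_inf _ g.injective]
    exact (LinearEquiv.finrank_map_eq g _).symm
  · intro hdim
    set k := finrank ℝ ↥(W1 ⊓ W2)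
    have hk : k ≤ m := h2.1 ▸ Submodule.finrank_mono inf_le_right
    obtain ⟨p, q, hpq, hW1, hW2⟩ := exists_isSymplecticPair_of_orthogonal_eq
      (omegaForm_nondegenerate m) (omegaForm_isAlt m) h1.orthogonal_eq h2.orthogonal_eq (k := k)
      (r := m - k) rfl (by rw [h2.1]; omega)
    obtain ⟨p', q', hpq', hW3, hW4⟩ := exists_isSymplecticPair_of_orthogonal_eq
      (omegaForm_nondegenerate m) (omegaForm_isAlt m) h3.orthogonal_eq h4.orthogonal_eq
      (r := m - k) hdim.symm (by rw [h4.1]; omega)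
    obtain ⟨g, hg, hgp, hgq⟩ := hpq.exists_isometry (omegaForm_isAlt m) hpq'
      (by simp only [finrank_fin_fun, Fintype.card_sum, Fintype.card_fin]; omega)
    refine ⟨g, fun x y => by simpa [omegaForm_apply] using hg x y, ?_, ?_⟩
    · rw [hW1, hW3, Submodule.map_span, ← Set.range_comp, LinearEquiv.coe_coe, hgp]
    · rw [hW2, hW4, Submodule.map_span, ← Set.range_comp, LinearEquiv.coe_coe, Sum.comp_elim,
        ← Function.comp_assoc, ← Function.comp_assoc, hgp, hgq]
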